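/- Assume (Reg) and (Twist), and fix d = (d₁,…,d_K) with every dᵢ > 0. Then the sets V_{d,1},…,V_{d,K} cover Ω; for any two indices i ≠ j one has μ(V_{d,i} ∩ V_{d,j}) = 0; and consequently Σ_{i=1}^K μ(V_{d,i}) = μ(Ω) = 1. -/

import Mathlib

open MeasureTheory Set Filter Topology Function
open scoped RealInnerProductSpace ENNReal NNReal Classical

noncomputable section

/-- `d`-dimensional Euclidean space. -/
abbrev Euc (d : ℕ) : Type := EuclideanSpace ℝ (Fin d)

/-- Gradient of the cost in the first variable: Dc(x,x̄). -/
def Dc {d : ℕ} (c : Euc d → Euc d → ℝ) (x y : Euc d) : Euc d :=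
  gradient (fun x' => c x' y) x

/-- Gradient of the cost in the second variable: D̄c(x,x̄). -/
def Dbc {d : ℕ} (c : Euc d → Euc d → ℝ) (x y : Euc d) : Euc d :=
  gradient (fun y' => c x y') y

/-- (Reg): the cost is C⁴ on cl(Ω) × cl(Ω̄). -/
def Reg {d : ℕ} (c : Euc d → Euc d → ℝ) (Om Omb : Set (Euc d)) : Prop :=
  ContDiffOn ℝ 4 (fun p : Euc d × Euc d => c p.1 p.2) (closure Om ×ˢ closure Omb)

/-- (Twist): x̄ ↦ −Dc(x₀,x̄) is injective on cl(Ω̄) and x ↦ −D̄c(x,x̄₀) is injective on cl(Ω). -/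
def Twist {d : ℕ} (c : Euc d → Euc d → ℝ) (Om Omb : Set (Euc d)) : Prop :=
  (∀ x₀ ∈ closure Om, Set.InjOn (fun y => -Dc c x₀ y) (closure Omb)) ∧
  (∀ y₀ ∈ closure Omb, Set.InjOn (fun x => -Dbc c x y₀) (closure Om))

/-- Partial derivative in the i-th coordinate of the first variable. -/
def pd1 {d : ℕ} (c : Euc d → Euc d → ℝ) (i : Fin d) : Euc d → Euc d → ℝ :=
  fun x y => fderiv ℝ (fun x' => c x' y) x (EuclideanSpace.single i 1)

/-- Partial derivative in the j-th coordinate of the second variable. -/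
def pd2 {d : ℕ} (c : Euc d → Euc d → ℝ) (j : Fin d) : Euc d → Euc d → ℝ :=
  fun x y => fderiv ℝ (fun y' => c x y') y (EuclideanSpace.single j 1)

/-- The matrix −∂²c/∂xⁱ∂x̄ʲ (i.e. −DD̄c). -/
def negMixed {d : ℕ} (c : Euc d → Euc d → ℝ) (x y : Euc d) : Matrix (Fin d) (Fin d) ℝ :=
  Matrix.of fun i j => -(pd1 (pd2 c j) i x y)

/-- The mixed Hessian c_{r,s̄}. -/
def mixedHess {d : ℕ} (c : Euc d → Euc d → ℝ) (x y : Euc d) : Matrix (Fin d) (Fin d) ℝ :=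
  Matrix.of fun r s => pd2 (pd1 c r) s x y

/-- (Nondeg): the mixed second-derivative matrix is invertible on cl(Ω) × cl(Ω̄). -/
def Nondeg {d : ℕ} (c : Euc d → Euc d → ℝ) (Om Omb : Set (Euc d)) : Prop :=
  ∀ x ∈ closure Om, ∀ y ∈ closure Omb, (negMixed c x y).det ≠ 0

/-- (MTW₊): the strong Ma–Trudinger–Wang condition. -/
def MTWplus {d : ℕ} (c : Euc d → Euc d → ℝ) (Om Omb : Set (Euc d)) : Prop :=
  ∃ δ₀ > (0:ℝ), ∀ x ∈ closure Om, ∀ y ∈ closure Omb, ∀ V η : Euc d,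
    (inner ℝ η V : ℝ) = 0 →
      δ₀ * ‖V‖ ^ 2 * ‖η‖ ^ 2 ≤
        ∑ i, ∑ j, ∑ k, ∑ l,
          (-(pd1 (pd1 (pd2 (pd1 c i) j) l) k x y) +
              ∑ r, ∑ s,
                pd2 (pd2 (pd1 c i) j) s x y * (mixedHess c x y)⁻¹ s r *
                  pd1 (pd1 (pd1 c r) l) k x y) *
            V i * V j * η k * η l

/-- c-convexity: Ω is c-convex w.r.t. every x̄ᵢ, and Ω̄ is c-convex w.r.t. every x ∈ Ω. -/
def CConvexAssumptions {d K : ℕ} (c : Euc d → Euc d → ℝ) (Om Omb : Set (Euc d))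
    (xb : Fin K → Euc d) : Prop :=
  (∀ i, Convex ℝ ((fun x => -Dbc c x (xb i)) '' Om)) ∧
  (∀ x ∈ Om, Convex ℝ ((fun y => -Dc c x y) '' Omb))

/-- The measure μ = I · (Lebesgue restricted to Ω). -/
def muM {d : ℕ} (Om : Set (Euc d)) (I : Euc d → ℝ) : Measure (Euc d) :=
  (volume.restrict Om).withDensity fun x => ENNReal.ofReal (I x)

/-- φ_d(x) = max_i (−c(x,x̄ᵢ) − log dᵢ). -/
def phiF {d K : ℕ} (c : Euc d → Euc d → ℝ) (xb : Fin K → Euc d) (dd : Fin K → ℝ)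
    (x : Euc d) : ℝ :=
  ⨆ i, (-(c x (xb i)) - Real.log (dd i))

/-- V_{d,i}. -/
def Vset {d K : ℕ} (c : Euc d → Euc d → ℝ) (Om : Set (Euc d)) (xb : Fin K → Euc d)
    (dd : Fin K → ℝ) (i : Fin K) : Set (Euc d) :=
  {x ∈ Om | ∀ k, -(c x (xb k)) - Real.log (dd k) ≤ -(c x (xb i)) - Real.log (dd i)}

/-- The visibility set vis_d(x̄ᵢ). -/
def vis {d K : ℕ} (c : Euc d → Euc d → ℝ) (Om : Set (Euc d)) (xb : Fin K → Euc d)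
    (dd : Fin K → ℝ) (i : Fin K) : Set (Euc d) :=
  {x ∈ Om | ∃ lam : ℝ, phiF c xb dd x = -(c x (xb i)) + lam ∧
      ∀ x' ∈ Om, -(c x' (xb i)) + lam ≤ phiF c xb dd x'}

/-- G^i(d) = μ(vis_d(x̄ᵢ)). -/
def G {d K : ℕ} (c : Euc d → Euc d → ℝ) (Om : Set (Euc d)) (I : Euc d → ℝ)
    (xb : Fin K → Euc d) (dd : Fin K → ℝ) (i : Fin K) : ℝ :=
  (muM Om I (vis c Om xb dd i)).toReal

/-- W_{i,j,d}. -/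
def Wset {d K : ℕ} (c : Euc d → Euc d → ℝ) (Om : Set (Euc d)) (xb : Fin K → Euc d)
    (dd : Fin K → ℝ) (i j : Fin K) : Set (Euc d) :=
  {x ∈ Om | -(c x (xb j)) - Real.log (dd j) ≤ -(c x (xb i)) - Real.log (dd i)}

/-- The c-exponential map at y: the inverse on Ω of x ↦ −D̄c(x,y). -/
def cexp {d : ℕ} (c : Euc d → Euc d → ℝ) (Om : Set (Euc d)) (y : Euc d) :
    Euc d → Euc d :=
  Function.invFunOn (fun x => -Dbc c x y) Om

/-- c̃_{k,i}(p) = c(Xᵢ(p), x̄_k) − c(Xᵢ(p), x̄ᵢ). -/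
def ctilde {d : ℕ} (c : Euc d → Euc d → ℝ) (Om : Set (Euc d)) (yk yi : Euc d)
    (p : Euc d) : ℝ :=
  c (cexp c Om yi p) yk - c (cexp c Om yi p) yi

/-- The set U_{k,d,Δd}. -/
def Uset {d K : ℕ} (c : Euc d → Euc d → ℝ) (Om : Set (Euc d)) (xb : Fin K → Euc d)
    (dd Δ : Fin K → ℝ) (i k : Fin K) : Set (Euc d) :=
  if 0 ≤ Δ k then
    {p ∈ (fun x => -Dbc c x (xb i)) '' Om |
        -(ctilde c Om (xb k) (xb i) p) = Real.log (dd k) - Real.log (dd i)} ∩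
      ((fun x => -Dbc c x (xb i)) '' ⋂ (l) (_ : l ≠ k), Wset c Om xb (dd + Δ) i l)
  else
    {p ∈ (fun x => -Dbc c x (xb i)) '' Om |
        -(ctilde c Om (xb k) (xb i) p) = Real.log (dd k + Δ k) - Real.log (dd i)} ∩
      ((fun x => -Dbc c x (xb i)) '' ⋂ (l) (_ : l ≠ k), Wset c Om xb dd i l)

/-- β_{i,k,Δd}. -/
def betaI {d K : ℕ} (c : Euc d → Euc d → ℝ) (Om : Set (Euc d)) (I : Euc d → ℝ)
    (xb : Fin K → Euc d) (dd Δ : Fin K → ℝ) (i k : Fin K) : ℝ :=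
  ∫ p in Uset c Om xb dd Δ i k,
    I (cexp c Om (xb i) p) * ‖gradient (ctilde c Om (xb k) (xb i)) p‖⁻¹ *
      |(fderiv ℝ (cexp c Om (xb i)) p).det| ∂(μH[(d : ℝ) - 1])

/-- The constant C of the paper. -/
def Cconst {d K : ℕ} (c : Euc d → Euc d → ℝ) (Om : Set (Euc d)) (xb : Fin K → Euc d) : ℝ :=
  sSup {r : ℝ | ∃ k l : Fin K, k ≠ l ∧ ∃ x ∈ Om,
    r = |(negMixed c x (xb l)).det| /
        ‖(EuclideanSpace.equiv (Fin d) ℝ).symm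
            ((negMixed c x (xb l))⁻¹.mulVec
              fun m => (-(Dc c x (xb l)) + Dc c x (xb k)) m)‖}

/-- T(x) = x̄ᵢ for the least index i with x ∈ V_{d,i} (junk value 0 otherwise). -/
def Tmap {d K : ℕ} (c : Euc d → Euc d → ℝ) (Om : Set (Euc d)) (xb : Fin K → Euc d)
    (dd : Fin K → ℝ) (x : Euc d) : Euc d :=
  if h : ∃ i, x ∈ Vset c Om xb dd i then xb (Fin.find (fun i => x ∈ Vset c Om xb dd i) h)
  else 0

lemma countable_of_isolated' {T : Set ℝ} (h : ∀ t ∈ T, ∀ᶠ s in 𝓝[≠] t, s ∉ T) :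
    T.Countable := by
  have : DiscreteTopology T := by
    rw [discreteTopology_subtype_iff]
    intro t ht
    rw [inf_principal_eq_bot]
    exact h t ht
  exact Set.countable_coe_iff.mp countable_of_Lindelof_of_discrete

lemma levelSet_null {d : ℕ} (f : Euc d → ℝ) (a : ℝ) {U : Set (Euc d)} (hU : IsOpen U)
    (hdiff : ∀ x ∈ U, DifferentiableAt ℝ f x)
    (hgrad : ∀ x ∈ U, fderiv ℝ f x ≠ 0) :
    volume {x | x ∈ U ∧ f x = a} = 0 := by
  set S : Set (Euc d) := {x | x ∈ U ∧ f x = a} with hSdef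
  -- S is measurable
  have hVopen : IsOpen {x | x ∈ U ∧ f x ≠ a} := by
    rw [isOpen_iff_mem_nhds]
    rintro x ⟨hxU, hxfa⟩
    filter_upwards [hU.mem_nhds hxU,
      (hdiff x hxU).continuousAt.preimage_mem_nhds
        (isOpen_compl_singleton.mem_nhds hxfa)] with z hz1 hz2
    exact ⟨hz1, hz2⟩
  have hSmeas : MeasurableSet S := by
    have : S = U \ {x | x ∈ U ∧ f x ≠ a} := by
      ext x; simp only [hSdef, Set.mem_setOf_eq, Set.mem_diff]; tauto
    rw [this]
    exact hU.measurableSet.diff hVopen.measurableSet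
  have hcover : S ⊆ ⋃ k : Fin d,
      S ∩ {x | fderiv ℝ f x (EuclideanSpace.single k 1) ≠ 0} := by
    intro x hx
    by_contra hcon
    simp only [Set.mem_iUnion, Set.mem_inter_iff, Set.mem_setOf_eq, not_exists, not_and,
      not_not] at hcon
    apply hgrad x hx.1
    have hzero : ∀ k : Fin d, fderiv ℝ f x (EuclideanSpace.single k 1) = 0 :=
      fun k => hcon k hx
    apply ContinuousLinearMap.coe_injective
    apply Module.Basis.ext (EuclideanSpace.basisFun (Fin d) ℝ).toBasis
    intro k
    simp only [OrthonormalBasis.coe_toBasis, EuclideanSpace.basisFun_apply,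
      ContinuousLinearMap.coe_coe, ContinuousLinearMap.zero_apply, LinearMap.zero_apply]
    exact hzero k
  refine measure_mono_null hcover (measure_iUnion_null fun k => ?_)
  obtain ⟨n, rfl⟩ : ∃ n, d = n + 1 := ⟨d - 1, by have := k.pos; omega⟩
  set Sk : Set (Euc (n+1)) := S ∩ {x | fderiv ℝ f x (EuclideanSpace.single k 1) ≠ 0} with hSkdef
  have hSkmeas : MeasurableSet Sk :=
    hSmeas.inter ((measurable_fderiv_apply_const ℝ f (EuclideanSpace.single k 1))
      (measurableSet_singleton (0:ℝ)).compl)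
  set e := (MeasurableEquiv.toLp 2 (Fin (n+1) → ℝ)).symm with hedef
  have he : MeasurePreserving e.symm volume volume :=
    (EuclideanSpace.volume_preserving_symm_measurableEquiv_toLp _).symm
  set p := MeasurableEquiv.piFinSuccAbove (fun _ : Fin (n+1) => ℝ) k with hpdef
  have hp : MeasurePreserving p.symm volume volume :=
    (volume_preserving_piFinSuccAbove (fun _ : Fin (n+1) => ℝ) k).symm
  set A : Set (Fin (n+1) → ℝ) := e.symm ⁻¹' Sk with hAdef
  set B : Set (ℝ × (Fin n → ℝ)) := p.symm ⁻¹' A with hBdef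
  have hAmeas : MeasurableSet A := e.symm.measurable hSkmeas
  have hBmeas : MeasurableSet B := p.symm.measurable hAmeas
  have key : ∀ y : Fin n → ℝ, volume ((fun t : ℝ => (t, y)) ⁻¹' B) = 0 := by
    intro y
    set ℓ : ℝ → Euc (n+1) := fun t => e.symm (p.symm (t, y)) with hldef
    have hmem : ∀ t : ℝ, t ∈ ((fun t : ℝ => (t, y)) ⁻¹' B) ↔ ℓ t ∈ Sk := fun t => Iff.rfl
    have hco : ∀ s : ℝ, ∀ i, ℓ s i = (Fin.insertNth (α := fun _ => ℝ) k s y) i := fun s i => rfl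
    have hline : ∀ t : ℝ, ℓ t = ℓ 0 + t • (EuclideanSpace.single k 1 : Euc (n+1)) := by
      intro t
      ext i
      rw [PiLp.add_apply, PiLp.smul_apply, EuclideanSpace.single_apply, hco, hco]
      rcases eq_or_ne i k with rfl | hik
      · simp [Fin.insertNth_apply_same]
      · obtain ⟨j, rfl⟩ := Fin.exists_succAbove_eq hik
        simp [Fin.insertNth_apply_succAbove, Fin.succAbove_ne k j]
    have hder : ∀ t : ℝ, HasDerivAt ℓ (EuclideanSpace.single k 1 : Euc (n+1)) t := by
      intro t
      have h1 : HasDerivAt (fun s : ℝ => ℓ 0 + s • (EuclideanSpace.single k 1 : Euc (n+1)))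
          (EuclideanSpace.single k 1 : Euc (n+1)) t := by
        simpa using ((hasDerivAt_id t).smul_const (EuclideanSpace.single k 1 : Euc (n+1))).const_add (ℓ 0)
      exact h1.congr_of_eventuallyEq (Filter.Eventually.of_forall fun s => hline s)
    refine Set.Countable.measure_zero ?_ _
    apply countable_of_isolated'
    intro t ht
    have hx : ℓ t ∈ Sk := ht
    obtain ⟨⟨hxU, hxa⟩, hxk⟩ := hx
    have hg : HasDerivAt (f ∘ ℓ) (fderiv ℝ f (ℓ t) (EuclideanSpace.single k 1)) t :=
      (hdiff _ hxU).hasFDerivAt.comp_hasDerivAt t (hder t)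
    have hslope := (hasDerivAt_iff_tendsto_slope.mp hg).eventually_ne hxk
    filter_upwards [hslope, self_mem_nhdsWithin] with s hs hst hsT
    have hfs : f (ℓ s) = a := hsT.1.2
    apply hs
    have hval : (f ∘ ℓ) s = (f ∘ ℓ) t := by
      simp only [Function.comp_apply, hfs, hxa]
    rw [slope_def_field, hval, sub_self, zero_div]
  calc volume Sk = volume A := (he.measure_preimage hSkmeas.nullMeasurableSet).symm
    _ = volume B := (hp.measure_preimage hAmeas.nullMeasurableSet).symm
    _ = 0 := by
        rw [Measure.volume_eq_prod, Measure.prod_apply_symm hBmeas]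
        simp only [key, lintegral_zero]

theorem statement5
    {d K : ℕ} (hd : 1 ≤ d) (hK : 2 ≤ K)
    (c : Euc d → Euc d → ℝ) (Om Omb : Set (Euc d))
    (hOmOpen : IsOpen Om) (hOmBdd : Bornology.IsBounded Om)
    (hOmbOpen : IsOpen Omb) (hOmbBdd : Bornology.IsBounded Omb)
    (hReg : Reg c Om Omb) (hTwist : Twist c Om Omb)
    (xb : Fin K → Euc d) (hxbmem : ∀ i, xb i ∈ Omb) (hxbinj : Function.Injective xb)
    (I : Euc d → ℝ) (hIsmooth : ContDiffOn ℝ (⊤ : ℕ∞) I (closure Om))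
    (hIpos : ∀ x ∈ closure Om, 0 < I x) (hInorm : (∫ x in Om, I x) = 1)
    (dd : Fin K → ℝ) (hdd : ∀ i, 0 < dd i) :
    Om = (⋃ i, Vset c Om xb dd i) ∧
    (∀ i j : Fin K, i ≠ j → muM Om I (Vset c Om xb dd i ∩ Vset c Om xb dd j) = 0) ∧
    (∑ i : Fin K, (muM Om I (Vset c Om xb dd i)).toReal) = (muM Om I Om).toReal ∧
    (muM Om I Om).toReal = 1 := by
  classical
  haveI hNe : Nonempty (Fin K) := ⟨⟨0, by omega⟩⟩
  have hdiffc : ∀ y ∈ Omb, ∀ x ∈ Om, DifferentiableAt ℝ (fun x' => c x' y) x := by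
    intro y hy x hx
    have hmem : closure Om ×ˢ closure Omb ∈ 𝓝 (x, y) :=
      Filter.mem_of_superset ((hOmOpen.prod hOmbOpen).mem_nhds ⟨hx, hy⟩)
        (Set.prod_mono subset_closure subset_closure)
    have h1 : ContDiffAt ℝ 4 (fun p : Euc d × Euc d => c p.1 p.2) (x, y) :=
      hReg.contDiffAt hmem
    have h2 : ContDiffAt ℝ 4 (fun x' : Euc d => c x' y) x :=
      h1.comp x (contDiffAt_id.prodMk contDiffAt_const)
    exact h2.differentiableAt (by norm_num)
  have hWnull : ∀ i j : Fin K, i ≠ j →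
      volume {x | x ∈ Om ∧ c x (xb j) - c x (xb i)
        = Real.log (dd i) - Real.log (dd j)} = 0 := by
    intro i j hij
    apply levelSet_null (fun x => c x (xb j) - c x (xb i)) _ hOmOpen
    · intro x hx
      exact (hdiffc (xb j) (hxbmem j) x hx).sub (hdiffc (xb i) (hxbmem i) x hx)
    · intro x hx
      have hdj := hdiffc (xb j) (hxbmem j) x hx
      have hdi := hdiffc (xb i) (hxbmem i) x hx
      rw [fderiv_fun_sub hdj hdi, sub_ne_zero]
      intro heq
      have hD : Dc c x (xb j) = Dc c x (xb i) := by
        unfold Dc gradient; rw [heq]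
      have hxbeq : xb j = xb i :=
        hTwist.1 x (subset_closure hx) (subset_closure (hxbmem j))
          (subset_closure (hxbmem i)) (show -Dc c x (xb j) = -Dc c x (xb i) by rw [hD])
      exact hij (hxbinj hxbeq).symm
  have hpart1 : Om = ⋃ i, Vset c Om xb dd i := by
    apply Set.Subset.antisymm
    · intro x hx
      obtain ⟨i, -, hi⟩ := Finset.exists_max_image Finset.univ
        (fun k => -(c x (xb k)) - Real.log (dd k)) Finset.univ_nonempty
      exact Set.mem_iUnion.mpr ⟨i, hx, fun k => hi k (Finset.mem_univ k)⟩
    · intro x hx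
      obtain ⟨i, hi⟩ := Set.mem_iUnion.mp hx
      exact hi.1
  have hpart2 : ∀ i j : Fin K, i ≠ j →
      muM Om I (Vset c Om xb dd i ∩ Vset c Om xb dd j) = 0 := by
    intro i j hij
    have hsub : Vset c Om xb dd i ∩ Vset c Om xb dd j ⊆
        {x | x ∈ Om ∧ c x (xb j) - c x (xb i)
          = Real.log (dd i) - Real.log (dd j)} := by
      rintro x ⟨hxi, hxj⟩
      refine ⟨hxi.1, ?_⟩
      have h1 := hxi.2 j
      have h2 := hxj.2 i
      linarith
    refine measure_mono_null hsub ?_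
    refine (withDensity_absolutelyContinuous _ _) ?_
    rw [Measure.restrict_apply' hOmOpen.measurableSet]
    exact measure_mono_null Set.inter_subset_left (hWnull i j hij)
  have hVmeas : ∀ i, MeasurableSet (Vset c Om xb dd i) := by
    intro i
    have hopenk : ∀ k : Fin K, IsOpen {x | x ∈ Om ∧
        -(c x (xb i)) - Real.log (dd i) < -(c x (xb k)) - Real.log (dd k)} := by
      intro k
      rw [isOpen_iff_mem_nhds]
      rintro x ⟨hxU, hk⟩
      have h1 := (hdiffc (xb k) (hxbmem k) x hxU).continuousAt
      have h2 := (hdiffc (xb i) (hxbmem i) x hxU).continuousAt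
      have hcont : ContinuousAt (fun x' => (-(c x' (xb k)) - Real.log (dd k)) -
          (-(c x' (xb i)) - Real.log (dd i))) x :=
        (h1.neg.sub continuousAt_const).sub (h2.neg.sub continuousAt_const)
      have hpos : (0:ℝ) < (-(c x (xb k)) - Real.log (dd k)) -
          (-(c x (xb i)) - Real.log (dd i)) := sub_pos.mpr hk
      filter_upwards [hOmOpen.mem_nhds hxU,
        hcont.preimage_mem_nhds (isOpen_Ioi.mem_nhds hpos)] with z hz1 hz2
      exact ⟨hz1, sub_pos.mp hz2⟩
    have hVeq : Vset c Om xb dd i = Om \ ⋃ k, {x | x ∈ Om ∧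
        -(c x (xb i)) - Real.log (dd i) < -(c x (xb k)) - Real.log (dd k)} := by
      ext x
      simp only [Vset, Set.mem_setOf_eq, Set.mem_diff, Set.mem_iUnion, not_exists,
        not_and, not_lt]
      constructor
      · rintro ⟨hx, h⟩; exact ⟨hx, fun k _ => h k⟩
      · rintro ⟨hx, h⟩; exact ⟨hx, fun k => h k hx⟩
    rw [hVeq]
    exact hOmOpen.measurableSet.diff (isOpen_iUnion hopenk).measurableSet
  have hclos : IsCompact (closure Om) := hOmBdd.isCompact_closure
  have hIint : IntegrableOn I Om volume :=
    ((hIsmooth.continuousOn).integrableOn_compact hclos).mono_set subset_closure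
  have hmuOm : muM Om I Om = 1 := by
    rw [muM, withDensity_apply _ hOmOpen.measurableSet,
      Measure.restrict_restrict hOmOpen.measurableSet, Set.inter_self]
    rw [← ofReal_integral_eq_lintegral_ofReal hIint
      ((ae_restrict_mem hOmOpen.measurableSet).mono fun x hx => (hIpos x (subset_closure hx)).le)]
    rw [hInorm]; exact ENNReal.ofReal_one
  have hfin : muM Om I Om ≠ ⊤ := by rw [hmuOm]; exact ENNReal.one_ne_top
  have hdisj : Pairwise (MeasureTheory.AEDisjoint (muM Om I) on fun i => Vset c Om xb dd i) :=
    fun i j hij => hpart2 i j hij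
  have hsum : (∑ i : Fin K, muM Om I (Vset c Om xb dd i)) = muM Om I Om := by
    have h := measure_iUnion₀ (μ := muM Om I) hdisj (fun i => (hVmeas i).nullMeasurableSet)
    rw [← hpart1, tsum_fintype] at h
    exact h.symm
  have hfinV : ∀ i : Fin K, muM Om I (Vset c Om xb dd i) ≠ ⊤ := fun i =>
    ne_top_of_le_ne_top hfin (measure_mono fun x hx => hx.1)
  refine ⟨hpart1, hpart2, ?_, by rw [hmuOm]; simp⟩
  rw [← ENNReal.toReal_sum (fun i _ => hfinV i), hsum]


end
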